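/- Let u(X) = −2X − 1 ∈ ℤ[X]. Then for every n ≥ 1, u^{(n)}(1) = ((−2)^{n+2} − 1)/3; and for any finite set A of prime numbers, u is weakly locally nilpotent at 1 outside A if and only if 2 ∈ A. (In particular, 3 divides u^{(1)}(1), no iterate u^{(n)}(1) is divisible by 2, and for every prime p ∉ {2,3}, p divides u^{(p−3)}(1).) -/

import Mathlib

/-!
The orbit of `1` under `x ↦ -2x - 1` solves a first-order linear recurrence, with closed
form `3 u⁽ⁿ⁾(1) = (-2)ⁿ⁺² - 1`. Every iterate is odd, so `2` divides none of them. For a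
prime `p ≥ 5`, Fermat's little theorem gives `p ∣ (-2)ᵖ⁻¹ - 1 = 3 u⁽ᵖ⁻³⁾(1)`, and
`u⁽¹⁾(1) = -3` takes care of `p = 3`.
-/

open Polynomial

/-- The `n`-th compositional iterate of the polynomial `u`, evaluated at `r`. -/
def iterEval (u : Polynomial ℤ) (n : ℕ) (r : ℤ) : ℤ :=
  (fun x => Polynomial.eval x u)^[n] r

/-- `u` is weakly locally nilpotent at `r` outside `A`: for every prime `p ∉ A`
there is `m ≥ 1` with `p ∣ u^{(m)}(r)`. -/
def WeaklyLocallyNilpotentAt (u : Polynomial ℤ) (r : ℤ) (A : Set ℕ) : Prop :=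
  ∀ p : ℕ, Nat.Prime p → p ∉ A → ∃ m : ℕ, 1 ≤ m ∧ (p : ℤ) ∣ iterEval u m r

/-- `u` is locally nilpotent at `r`: for every prime `p` there is `m ≥ 1`
with `p ∣ u^{(m)}(r)`. -/
def LocallyNilpotentAt (u : Polynomial ℤ) (r : ℤ) : Prop :=
  ∀ p : ℕ, Nat.Prime p → ∃ m : ℕ, 1 ≤ m ∧ (p : ℤ) ∣ iterEval u m r

/-- `u` is nilpotent at `r`: some iterate `u^{(n)}(r)` (with `n ≥ 1`) equals `0`. -/
def IsNilpotentAt (u : Polynomial ℤ) (r : ℤ) : Prop :=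
  ∃ n : ℕ, 1 ≤ n ∧ iterEval u n r = 0

/-- `u` is nilpotent at `r` with nilpotency index exactly `i`. -/
def NilpotentOfIndex (u : Polynomial ℤ) (r : ℤ) (i : ℕ) : Prop :=
  1 ≤ i ∧ iterEval u i r = 0 ∧ ∀ m : ℕ, 1 ≤ m → m < i → iterEval u m r ≠ 0

lemma iterEval_succ (u : ℤ[X]) (n : ℕ) (r : ℤ) :
    iterEval u (n + 1) r = eval (iterEval u n r) u :=
  Function.iterate_succ_apply' _ n r

lemma iterEval_affine (a b r : ℤ) (n : ℕ) :
    (a - 1) * iterEval (C a * X + C b) n r = a ^ n * ((a - 1) * r + b) - b := by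
  induction n with
  | zero => simp only [iterEval, Function.iterate_zero, id_eq, pow_zero]; ring
  | succ n ih =>
    rw [iterEval_succ, pow_succ]
    simp only [eval_add, eval_mul, eval_C, eval_X]
    linear_combination a * ih

lemma neg_two_X_sub_one_eq : (C (-2) * X - 1 : ℤ[X]) = C (-2) * X + C (-1) := by
  simp only [map_neg, map_one, sub_eq_add_neg]

lemma three_mul_iterEval_neg_two_X_sub_one (n : ℕ) :
    3 * iterEval (C (-2) * X - 1) n 1 = (-2 : ℤ) ^ (n + 2) - 1 := by
  have h := iterEval_affine (-2) (-1) 1 n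
  rw [← neg_two_X_sub_one_eq] at h
  linear_combination -h

lemma three_dvd_iterEval_one_neg_two_X_sub_one : (3 : ℤ) ∣ iterEval (C (-2) * X - 1) 1 1 :=
  ⟨-1, by simp [iterEval]⟩

lemma odd_iterEval_neg_two_X_sub_one (n : ℕ) : Odd (iterEval (C (-2) * X - 1) n 1) := by
  cases n with
  | zero => exact odd_one
  | succ n =>
    rw [iterEval_succ]
    simp only [eval_sub, eval_mul, eval_C, eval_X, eval_one]
    exact ⟨-iterEval (C (-2) * X - 1) n 1 - 1, by ring⟩

lemma prime_dvd_iterEval_neg_two_X_sub_one {p : ℕ} (hp : p.Prime) (h2 : p ≠ 2) (h3 : p ≠ 3) :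
    (p : ℤ) ∣ iterEval (C (-2) * X - 1) (p - 3) 1 := by
  have hp5 := hp.five_le_of_ne_two_of_ne_three h2 h3
  have hcop : IsCoprime (-2 : ℤ) p :=
    (Nat.isCoprime_iff_coprime.mpr ((Nat.coprime_primes Nat.prime_two hp).mpr h2.symm)).neg_left
  have hfermat : (p : ℤ) ∣ 3 * iterEval (C (-2) * X - 1) (p - 3) 1 := by
    rw [three_mul_iterEval_neg_two_X_sub_one, show p - 3 + 2 = p - 1 by omega]
    exact (Int.ModEq.pow_card_sub_one_eq_one hp hcop).symm.dvd
  have hcop3 : IsCoprime (p : ℤ) 3 :=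
    Nat.isCoprime_iff_coprime.mpr ((Nat.coprime_primes hp Nat.prime_three).mpr h3)
  exact hcop3.dvd_of_dvd_mul_left hfermat

lemma exists_prime_dvd_iterEval_neg_two_X_sub_one {p : ℕ} (hp : p.Prime) (h2 : p ≠ 2) :
    ∃ m, 1 ≤ m ∧ (p : ℤ) ∣ iterEval (C (-2) * X - 1) m 1 := by
  by_cases h3 : p = 3
  · subst h3
    exact ⟨1, le_rfl, three_dvd_iterEval_one_neg_two_X_sub_one⟩
  · exact ⟨p - 3, by have := hp.five_le_of_ne_two_of_ne_three h2 h3; omega,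
      prime_dvd_iterEval_neg_two_X_sub_one hp h2 h3⟩

theorem neg_two_x_minus_one_analysis :
    (∀ n : ℕ, 1 ≤ n →
      3 * iterEval (C (-2) * X - 1) n 1 = (-2 : ℤ) ^ (n + 2) - 1) ∧
    (∀ A : Set ℕ, A.Finite → (∀ p ∈ A, Nat.Prime p) →
      (WeaklyLocallyNilpotentAt (C (-2) * X - 1) 1 A ↔ 2 ∈ A)) ∧
    (3 : ℤ) ∣ iterEval (C (-2) * X - 1) 1 1 ∧
    (∀ n : ℕ, 1 ≤ n → ¬ (2 : ℤ) ∣ iterEval (C (-2) * X - 1) n 1) ∧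
    (∀ p : ℕ, Nat.Prime p → p ≠ 2 → p ≠ 3 →
      (p : ℤ) ∣ iterEval (C (-2) * X - 1) (p - 3) 1) := by
  have not_two_dvd (n : ℕ) : ¬ (2 : ℤ) ∣ iterEval (C (-2) * X - 1) n 1 :=
    Int.not_even_iff_odd.mpr (odd_iterEval_neg_two_X_sub_one n) ∘ even_iff_two_dvd.mpr
  refine ⟨fun n _ => three_mul_iterEval_neg_two_X_sub_one n, fun A _ _ => ⟨?_, ?_⟩,
    three_dvd_iterEval_one_neg_two_X_sub_one, fun n _ => not_two_dvd n,
    fun p hp => prime_dvd_iterEval_neg_two_X_sub_one hp⟩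
  · intro hwln
    by_contra h2
    obtain ⟨m, -, hm⟩ := hwln 2 Nat.prime_two h2
    exact not_two_dvd m hm
  · intro h2 p hp hpA
    exact exists_prime_dvd_iterEval_neg_two_X_sub_one hp (ne_of_mem_of_not_mem h2 hpA).symm
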